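/- arXiv:1509.09246 — 2 statements merged into one kernel-verified Lean document; each statement's English description precedes it below -/
import Mathlib

section
/- Let K = PSL₂(ℤ_p) and K_∞ ≤ K the subgroup of lower triangular matrices (images of matrices of the form [[a,0],[c,d]]). Fix s = [[x,y],[z,t]] in SL₂(ℤ_p) with (y,t) not representing the class of (0,1) in P¹(ℤ_p²). Then K_∞ ∩ sK_∞s⁻¹ consists exactly of the classes of matrices [[a,0],[c,d]] ∈ SL₂(ℤ_p) satisfying y·t·(a − d) = y²·c. -/
variable (p : ℕ) [Fact p.Prime]

/-- The subgroup of SL₂(ℤ_p) of lower triangular matrices [[a,0],[c,d]]. -/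
def lowerTriangularSL : Subgroup (Matrix.SpecialLinearGroup (Fin 2) (PadicInt p)) where
  carrier := {A | (A : Matrix (Fin 2) (Fin 2) (PadicInt p)) 0 1 = 0}
  one_mem' := by simp
  mul_mem' := by
    intro A B hA hB
    simp only [Set.mem_setOf_eq] at *
    rw [Matrix.SpecialLinearGroup.coe_mul, Matrix.mul_apply, Fin.sum_univ_two, hA, hB]
    ring
  inv_mem' := by
    intro A hA
    simp only [Set.mem_setOf_eq] at *
    rw [Matrix.SpecialLinearGroup.coe_inv, Matrix.adjugate_fin_two]
    simpa using hA

/-- PSL₂(ℤ_p), the quotient of SL₂(ℤ_p) by its center {±1}. -/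
abbrev PSL2Zp := Matrix.SpecialLinearGroup (Fin 2) (PadicInt p) ⧸
  Subgroup.center (Matrix.SpecialLinearGroup (Fin 2) (PadicInt p))

/-- K_∞ ≤ PSL₂(ℤ_p): the image of the lower triangular subgroup. -/
noncomputable def Kinf : Subgroup (PSL2Zp p) :=
  (lowerTriangularSL p).map
    (QuotientGroup.mk' (Subgroup.center (Matrix.SpecialLinearGroup (Fin 2) (PadicInt p))))

namespace QuotientGroup

variable {G : Type*} [Group G] {N H : Subgroup G} [N.Normal]

theorem mk'_mem_map_mk'_iff (hNH : N ≤ H) (g : G) : mk' N g ∈ H.map (mk' N) ↔ g ∈ H := by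
  rw [← Subgroup.mem_comap, comap_map_mk', sup_eq_right.mpr hNH]

theorem mk'_mem_map_conj_map_mk'_iff (hNH : N ≤ H) (s g : G) :
    mk' N g ∈ (H.map (mk' N)).map (MulAut.conj (mk' N s)).toMonoidHom ↔ s⁻¹ * g * s ∈ H := by
  rw [Subgroup.mem_map_equiv, MulAut.conj_symm_apply, ← map_inv, ← map_mul, ← map_mul,
    mk'_mem_map_mk'_iff hNH]

end QuotientGroup

namespace Matrix.SpecialLinearGroup

variable {R : Type*} [CommRing R]

theorem inv_mul_mul_apply_zero_one (s A : SpecialLinearGroup (Fin 2) R) :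
    (↑(s⁻¹ * A * s) : Matrix (Fin 2) (Fin 2) R) 0 1 =
      s 0 1 * s 1 1 * (A 0 0 - A 1 1) + s 1 1 ^ 2 * A 0 1 - s 0 1 ^ 2 * A 1 0 := by
  rw [coe_mul, coe_mul, coe_inv, adjugate_fin_two]
  simp only [mul_apply, Fin.sum_univ_two, of_apply, cons_val', cons_val_zero, cons_val_one,
    empty_val', cons_val_fin_one]
  ring

end Matrix.SpecialLinearGroup

open Matrix.SpecialLinearGroup

theorem center_le_lowerTriangularSL :
    Subgroup.center (Matrix.SpecialLinearGroup (Fin 2) (PadicInt p)) ≤ lowerTriangularSL p := by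
  intro A hA
  obtain ⟨r, -, hrA⟩ := mem_center_iff.mp hA
  show (A : Matrix (Fin 2) (Fin 2) (PadicInt p)) 0 1 = 0
  simp [← hrA]

theorem inv_mul_mul_mem_lowerTriangularSL_iff
    (s : Matrix.SpecialLinearGroup (Fin 2) (PadicInt p))
    {A : Matrix.SpecialLinearGroup (Fin 2) (PadicInt p)} (hA : A ∈ lowerTriangularSL p) :
    s⁻¹ * A * s ∈ lowerTriangularSL p ↔
      s 0 1 * s 1 1 * (A 0 0 - A 1 1) = s 0 1 ^ 2 * A 1 0 := by
  change (↑(s⁻¹ * A * s) : Matrix (Fin 2) (Fin 2) (PadicInt p)) 0 1 = 0 ↔ _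
  rw [inv_mul_mul_apply_zero_one, show (A : Matrix (Fin 2) (Fin 2) (PadicInt p)) 0 1 = 0 from hA,
    mul_zero, add_zero, sub_eq_zero]

theorem Kinf_inter_conj (s : Matrix.SpecialLinearGroup (Fin 2) (PadicInt p))
    (k : PSL2Zp p) :
    (k ∈ Kinf p ⊓ (Kinf p).map (MulAut.conj
        (QuotientGroup.mk' (Subgroup.center _) s)).toMonoidHom) ↔
      ∃ A : Matrix.SpecialLinearGroup (Fin 2) (PadicInt p),
        QuotientGroup.mk' (Subgroup.center _) A = k ∧
        (A : Matrix (Fin 2) (Fin 2) (PadicInt p)) 0 1 = 0 ∧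
        (s : Matrix (Fin 2) (Fin 2) (PadicInt p)) 0 1 *
            (s : Matrix (Fin 2) (Fin 2) (PadicInt p)) 1 1 *
            ((A : Matrix (Fin 2) (Fin 2) (PadicInt p)) 0 0 -
              (A : Matrix (Fin 2) (Fin 2) (PadicInt p)) 1 1) =
          (s : Matrix (Fin 2) (Fin 2) (PadicInt p)) 0 1 ^ 2 *
            (A : Matrix (Fin 2) (Fin 2) (PadicInt p)) 1 0 := by
  have hconj := QuotientGroup.mk'_mem_map_conj_map_mk'_iff (center_le_lowerTriangularSL p) s
  constructor
  · rintro ⟨⟨A, hA, rfl⟩, hAs⟩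
    exact ⟨A, rfl, hA, (inv_mul_mul_mem_lowerTriangularSL_iff p s hA).mp ((hconj A).mp hAs)⟩
  · rintro ⟨A, rfl, hA, hAs⟩
    exact ⟨⟨A, hA, rfl⟩, (hconj A).mpr ((inv_mul_mul_mem_lowerTriangularSL_iff p s hA).mpr hAs)⟩
end

section
/- Let K = PSL₂(ℤ_p) and let K_∞ be the lower triangular subgroup. If s₁K_∞, s₂K_∞, s₃K_∞ are three pairwise distinct cosets in K/K_∞, then s₁K_∞s₁⁻¹ ∩ s₂K_∞s₂⁻¹ ∩ s₃K_∞s₃⁻¹ = {e}. -/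
variable (p : ℕ) [Fact p.Prime]

namespace TripleAux

abbrev SL2 (p : ℕ) [Fact p.Prime] := Matrix.SpecialLinearGroup (Fin 2) (PadicInt p)

lemma conj_entry (S A : SL2 p) :
    ((S⁻¹ * A * S : SL2 p) : Matrix (Fin 2) (Fin 2) (PadicInt p)) 0 1 =
      (A : Matrix (Fin 2) (Fin 2) (PadicInt p)) 0 1 * ((S : Matrix (Fin 2) (Fin 2) (PadicInt p)) 1 1)^2
      + ((A : Matrix (Fin 2) (Fin 2) (PadicInt p)) 0 0 - (A : Matrix (Fin 2) (Fin 2) (PadicInt p)) 1 1)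
        * ((S : Matrix (Fin 2) (Fin 2) (PadicInt p)) 0 1 * (S : Matrix (Fin 2) (Fin 2) (PadicInt p)) 1 1)
      - (A : Matrix (Fin 2) (Fin 2) (PadicInt p)) 1 0 * ((S : Matrix (Fin 2) (Fin 2) (PadicInt p)) 0 1)^2 := by
  rw [Matrix.SpecialLinearGroup.coe_mul, Matrix.SpecialLinearGroup.coe_mul,
    Matrix.SpecialLinearGroup.coe_inv, Matrix.adjugate_fin_two]
  simp only [Matrix.mul_apply, Fin.sum_univ_two, Matrix.cons_val', Matrix.cons_val_zero, Matrix.cons_val_one, Matrix.head_cons, Matrix.empty_val', Matrix.cons_val_fin_one, Matrix.head_fin_const, Matrix.of_apply]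
  ring

lemma prod_entry (S T : SL2 p) :
    ((S⁻¹ * T : SL2 p) : Matrix (Fin 2) (Fin 2) (PadicInt p)) 0 1 =
      (S : Matrix (Fin 2) (Fin 2) (PadicInt p)) 1 1 * (T : Matrix (Fin 2) (Fin 2) (PadicInt p)) 0 1
      - (S : Matrix (Fin 2) (Fin 2) (PadicInt p)) 0 1 * (T : Matrix (Fin 2) (Fin 2) (PadicInt p)) 1 1 := by
  rw [Matrix.SpecialLinearGroup.coe_mul, Matrix.SpecialLinearGroup.coe_inv, Matrix.adjugate_fin_two]
  simp only [Matrix.mul_apply, Fin.sum_univ_two, Matrix.cons_val', Matrix.cons_val_zero, Matrix.cons_val_one, Matrix.head_cons, Matrix.empty_val', Matrix.cons_val_fin_one, Matrix.head_fin_const, Matrix.of_apply]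
  ring

lemma mem_Kinf_iff (B : SL2 p) :
    (QuotientGroup.mk B : PSL2Zp p) ∈ Kinf p ↔
      (B : Matrix (Fin 2) (Fin 2) (PadicInt p)) 0 1 = 0 := by
  rw [Kinf, Subgroup.mem_map]
  constructor
  · rintro ⟨L, hL, hLB⟩
    have hLB' : QuotientGroup.mk' (Subgroup.center (SL2 p)) L
        = QuotientGroup.mk' (Subgroup.center (SL2 p)) B := hLB
    obtain ⟨z, hz, hzB⟩ := (QuotientGroup.mk'_eq_mk' (Subgroup.center (SL2 p))).mp hLB'
    obtain ⟨r, -, hrz⟩ := Matrix.SpecialLinearGroup.mem_center_iff.mp hz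
    have hL01 : (L : Matrix (Fin 2) (Fin 2) (PadicInt p)) 0 1 = 0 := hL
    rw [← hzB, Matrix.SpecialLinearGroup.coe_mul, Matrix.mul_apply, Fin.sum_univ_two, ← hrz,
      Matrix.scalar_apply, Matrix.diagonal_apply_ne _ (by decide), hL01]
    ring
  · intro hB
    exact ⟨B, hB, rfl⟩

/-- Binary quadratic with three projectively distinct roots is zero. -/
lemma quad_zero {b c d x₁ y₁ x₂ y₂ x₃ y₃ : PadicInt p}
    (e₁ : b * y₁^2 + d * (x₁ * y₁) - c * x₁^2 = 0)
    (e₂ : b * y₂^2 + d * (x₂ * y₂) - c * x₂^2 = 0)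
    (e₃ : b * y₃^2 + d * (x₃ * y₃) - c * x₃^2 = 0)
    (h12 : x₁ * y₂ - x₂ * y₁ ≠ 0)
    (h13 : x₁ * y₃ - x₃ * y₁ ≠ 0)
    (h23 : x₂ * y₃ - x₃ * y₂ ≠ 0) :
    b = 0 ∧ c = 0 ∧ d = 0 := by
  have hD : (x₁ * y₂ - x₂ * y₁) * ((x₁ * y₃ - x₃ * y₁) * (x₂ * y₃ - x₃ * y₂)) ≠ 0 :=
    mul_ne_zero h12 (mul_ne_zero h13 h23)
  refine ⟨?_, ?_, ?_⟩
  · have : b * ((x₁ * y₂ - x₂ * y₁) * ((x₁ * y₃ - x₃ * y₁) * (x₂ * y₃ - x₃ * y₂))) = 0 := by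
      linear_combination (-(x₂*x₃*(x₃*y₂ - x₂*y₃))) * e₁ + (x₁*x₃*(x₃*y₁ - x₁*y₃)) * e₂
        + (-(x₁*x₂*(x₂*y₁ - x₁*y₂))) * e₃
    exact (mul_eq_zero.mp this).resolve_right hD
  · have : c * ((x₁ * y₂ - x₂ * y₁) * ((x₁ * y₃ - x₃ * y₁) * (x₂ * y₃ - x₃ * y₂))) = 0 := by
      linear_combination (y₂*y₃*(x₃*y₂ - x₂*y₃)) * e₁ + (-(y₁*y₃*(x₃*y₁ - x₁*y₃))) * e₂
        + (y₁*y₂*(x₂*y₁ - x₁*y₂)) * e₃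
    exact (mul_eq_zero.mp this).resolve_right hD
  · have : d * ((x₁ * y₂ - x₂ * y₁) * ((x₁ * y₃ - x₃ * y₁) * (x₂ * y₃ - x₃ * y₂))) = 0 := by
      linear_combination (y₂^2*x₃^2 - y₃^2*x₂^2) * e₁ + (-(y₁^2*x₃^2 - y₃^2*x₁^2)) * e₂
        + (y₁^2*x₂^2 - y₂^2*x₁^2) * e₃
    exact (mul_eq_zero.mp this).resolve_right hD

end TripleAux

open TripleAux in
/-- Stmt 16: in K = PSL₂(ℤ_p) with K_∞ the lower triangular subgroup, if s₁K_∞, s₂K_∞,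
s₃K_∞ are pairwise distinct cosets in K/K_∞, then
s₁K_∞s₁⁻¹ ∩ s₂K_∞s₂⁻¹ ∩ s₃K_∞s₃⁻¹ = {e}. -/
theorem triple_conj_inter_trivial (s₁ s₂ s₃ : PSL2Zp p)
    (h12 : (QuotientGroup.mk s₁ : PSL2Zp p ⧸ Kinf p) ≠ QuotientGroup.mk s₂)
    (h13 : (QuotientGroup.mk s₁ : PSL2Zp p ⧸ Kinf p) ≠ QuotientGroup.mk s₃)
    (h23 : (QuotientGroup.mk s₂ : PSL2Zp p ⧸ Kinf p) ≠ QuotientGroup.mk s₃) :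
    (Kinf p).map (MulAut.conj s₁).toMonoidHom ⊓ (Kinf p).map (MulAut.conj s₂).toMonoidHom ⊓
      (Kinf p).map (MulAut.conj s₃).toMonoidHom = ⊥ := by
  obtain ⟨S₁, rfl⟩ := QuotientGroup.mk_surjective s₁
  obtain ⟨S₂, rfl⟩ := QuotientGroup.mk_surjective s₂
  obtain ⟨S₃, rfl⟩ := QuotientGroup.mk_surjective s₃
  -- translate the distinctness hypotheses
  have hne : ∀ S T : SL2 p, (QuotientGroup.mk (QuotientGroup.mk S : PSL2Zp p)
        : PSL2Zp p ⧸ Kinf p) ≠ QuotientGroup.mk (QuotientGroup.mk T) →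
      (S : Matrix (Fin 2) (Fin 2) (PadicInt p)) 1 1 * (T : Matrix (Fin 2) (Fin 2) (PadicInt p)) 0 1
      - (S : Matrix (Fin 2) (Fin 2) (PadicInt p)) 0 1 * (T : Matrix (Fin 2) (Fin 2) (PadicInt p)) 1 1 ≠ 0 := by
    intro S T hST h0
    apply hST
    rw [QuotientGroup.eq]
    have : ((QuotientGroup.mk S : PSL2Zp p))⁻¹ * QuotientGroup.mk T
        = (QuotientGroup.mk (S⁻¹ * T) : PSL2Zp p) := by
      rw [QuotientGroup.mk_mul, QuotientGroup.mk_inv]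
    rw [this, mem_Kinf_iff, prod_entry, h0]
  have k12 := hne S₁ S₂ h12
  have k13 := hne S₁ S₃ h13
  have k23 := hne S₂ S₃ h23
  rw [eq_bot_iff]
  rintro g ⟨⟨hg1, hg2⟩, hg3⟩
  obtain ⟨A, rfl⟩ := QuotientGroup.mk_surjective g
  have hmem : ∀ S : SL2 p, (QuotientGroup.mk A : PSL2Zp p) ∈
        (Kinf p).map (MulAut.conj (QuotientGroup.mk S : PSL2Zp p)).toMonoidHom →
      ((S⁻¹ * A * S : SL2 p) : Matrix (Fin 2) (Fin 2) (PadicInt p)) 0 1 = 0 := by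
    intro S hS
    rw [Subgroup.mem_map_equiv, MulAut.conj_symm_apply] at hS
    have : ((QuotientGroup.mk S : PSL2Zp p))⁻¹ * QuotientGroup.mk A * QuotientGroup.mk S
        = (QuotientGroup.mk (S⁻¹ * A * S) : PSL2Zp p) := by
      rw [QuotientGroup.mk_mul, QuotientGroup.mk_mul, QuotientGroup.mk_inv]
    rw [this, mem_Kinf_iff] at hS
    exact hS
  have e₁ := hmem S₁ hg1
  have e₂ := hmem S₂ hg2
  have e₃ := hmem S₃ hg3
  rw [conj_entry] at e₁ e₂ e₃
  set x₁ := (S₁ : Matrix (Fin 2) (Fin 2) (PadicInt p)) 0 1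
  set y₁ := (S₁ : Matrix (Fin 2) (Fin 2) (PadicInt p)) 1 1
  set x₂ := (S₂ : Matrix (Fin 2) (Fin 2) (PadicInt p)) 0 1
  set y₂ := (S₂ : Matrix (Fin 2) (Fin 2) (PadicInt p)) 1 1
  set x₃ := (S₃ : Matrix (Fin 2) (Fin 2) (PadicInt p)) 0 1
  set y₃ := (S₃ : Matrix (Fin 2) (Fin 2) (PadicInt p)) 1 1
  have k12' : x₁ * y₂ - x₂ * y₁ ≠ 0 := fun h => k12 (by linear_combination -h)
  have k13' : x₁ * y₃ - x₃ * y₁ ≠ 0 := fun h => k13 (by linear_combination -h)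
  have k23' : x₂ * y₃ - x₃ * y₂ ≠ 0 := fun h => k23 (by linear_combination -h)
  obtain ⟨hb, hc, hd⟩ := quad_zero (p := p) e₁ e₂ e₃ k12' k13' k23'
  -- now A is diagonal with equal diagonal entries, hence central
  rw [Subgroup.mem_bot, QuotientGroup.eq_one_iff]
  apply Matrix.SpecialLinearGroup.mem_center_iff.mpr
  refine ⟨(A : Matrix (Fin 2) (Fin 2) (PadicInt p)) 0 0, ?_, ?_⟩
  · have hdet := A.property
    rw [Matrix.det_fin_two] at hdet
    have : (A : Matrix (Fin 2) (Fin 2) (PadicInt p)) 1 1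
        = (A : Matrix (Fin 2) (Fin 2) (PadicInt p)) 0 0 := by linear_combination -hd
    simp only [Fintype.card_fin]
    rw [sq]
    linear_combination hdet + (A : Matrix (Fin 2) (Fin 2) (PadicInt p)) 0 0 * hd
      + (A : Matrix (Fin 2) (Fin 2) (PadicInt p)) 1 0 * hb
  · ext i j
    fin_cases i <;> fin_cases j <;>
      simp [Matrix.scalar_apply, Matrix.diagonal_apply]
    · exact hb.symm
    · exact hc.symm
    · linear_combination hd
end
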